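/- arXiv:1807.08367 — 2 statements merged into one kernel-verified Lean document; each statement's English description precedes it below -/
import Mathlib

section
/- For any integer n ≥ 1 and any real x > arccosh(√2), we have 2 · ∑_{k=0}^{n-1} cosh²(k·x) < cosh²(n·x). -/
/-!
Write `a k = cosh² (k x)`. Since `x > arccosh √2` means `cosh² x > 2`, we have `2 a 0 < a 1`, and it
suffices to show `3 a m ≤ a (m + 1)` for `m ≥ 1`: then by induction
`2 ∑_{k ≤ m} a k < a m + 2 a m ≤ a (m + 1)`.
For the ratio, `cosh x · cosh ((m + 1) x) ≥ cosh (2x) · cosh (m x)` (product-to-sum), and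
`(2c² - 1)² > 3c²` for `c = cosh x`, `c² > 2`.
-/

noncomputable def arccosh (x : ℝ) : ℝ := Real.log (x + Real.sqrt (x ^ 2 - 1))

open Real

lemma arccosh_eq_arcosh : arccosh = arcosh := rfl

lemma lt_cosh_of_arccosh_lt {x y : ℝ} (hy : 1 ≤ y) (h : arccosh y < x) : y < cosh x := by
  rw [arccosh_eq_arcosh] at h
  rw [← cosh_arcosh hy, cosh_lt_cosh, abs_of_nonneg (arcosh_nonneg hy)]
  exact h.trans_le (le_abs_self x)

lemma two_mul_sum_range_lt_of_three_mul_le (a : ℕ → ℝ) (h₁ : 2 * a 0 < a 1)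
    (hstep : ∀ m, 1 ≤ m → 3 * a m ≤ a (m + 1)) (n : ℕ) (hn : 1 ≤ n) :
    2 * ∑ k ∈ Finset.range n, a k < a n := by
  induction n, hn using Nat.le_induction with
  | base => simpa using h₁
  | succ m hm ih =>
    rw [Finset.sum_range_succ]
    linarith [hstep m hm]

/-- `2 cosh a cosh b = cosh (a + b) + cosh (a - b)` reduces this to `cosh (2x - y) ≤ cosh y`. -/
lemma cosh_two_mul_mul_cosh_le {x y : ℝ} (hx : 0 ≤ x) (hxy : x ≤ y) :
    cosh (2 * x) * cosh y ≤ cosh x * cosh (x + y) := by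
  have h : cosh (2 * x - y) ≤ cosh y := by
    rw [cosh_le_cosh, abs_le, abs_of_nonneg (hx.trans hxy)]
    constructor <;> linarith
  have hl : 2 * (cosh (2 * x) * cosh y) = cosh (2 * x + y) + cosh (2 * x - y) := by
    rw [cosh_add, cosh_sub]; ring
  have hr : 2 * (cosh x * cosh (x + y)) = cosh (2 * x + y) + cosh y := by
    rw [show 2 * x + y = x + (x + y) by ring, cosh_add x (x + y), cosh_add, sinh_add]
    linear_combination cosh y * cosh_sq x
  linarith

lemma three_mul_cosh_sq_lt_cosh_add_sq {x y : ℝ} (hc : 2 < cosh x ^ 2) (hx : 0 ≤ x)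
    (hxy : x ≤ y) : 3 * cosh y ^ 2 < cosh (x + y) ^ 2 := by
  have hratio : 3 * cosh x ^ 2 < cosh (2 * x) ^ 2 := by
    have h2x : cosh (2 * x) = 2 * cosh x ^ 2 - 1 := by rw [cosh_two_mul, sinh_sq]; ring
    rw [h2x]
    nlinarith
  have key : cosh x ^ 2 * (3 * cosh y ^ 2) < cosh x ^ 2 * cosh (x + y) ^ 2 :=
    calc cosh x ^ 2 * (3 * cosh y ^ 2) = 3 * cosh x ^ 2 * cosh y ^ 2 := by ring
      _ < cosh (2 * x) ^ 2 * cosh y ^ 2 := by gcongr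
      _ = (cosh (2 * x) * cosh y) ^ 2 := by ring
      _ ≤ (cosh x * cosh (x + y)) ^ 2 := by
        gcongr ?_ ^ 2; exact cosh_two_mul_mul_cosh_le hx hxy
      _ = cosh x ^ 2 * cosh (x + y) ^ 2 := by ring
  exact lt_of_mul_lt_mul_left key (by positivity)

theorem sum_cosh_sq_lt (n : ℕ) (hn : 1 ≤ n) (x : ℝ) (hx : x > arccosh (Real.sqrt 2)) :
    2 * ∑ k ∈ Finset.range n, Real.cosh (k * x) ^ 2 < Real.cosh (n * x) ^ 2 := by
  have hx0 : 0 < x := (arcosh_pos one_lt_sqrt_two).trans hx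
  have hc : 2 < cosh x ^ 2 := lt_sq_of_sqrt_lt (lt_cosh_of_arccosh_lt one_lt_sqrt_two.le hx)
  refine two_mul_sum_range_lt_of_three_mul_le (fun k => cosh (k * x) ^ 2) ?_ ?_ n hn
  · simpa using hc
  · intro m hm
    have hmx : x ≤ m * x := le_mul_of_one_le_left hx0.le (by exact_mod_cast hm)
    simpa only [Nat.cast_succ, add_mul, one_mul, add_comm _ x] using
      (three_mul_cosh_sq_lt_cosh_add_sq hc hx0.le hmx).le
end

section
/- Fix an integer n ≥ 1 and let e(t) = 4n · arcsinh(coth t) for t > 0. Then there exists a unique t > 0 such that cosh(t) = tanh(e(t)/4) · sinh(e(t)/4). -/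
/-!
With `u(t) = n · arsinh (coth t)`, the right-hand side is
`tanh u · sinh u = cosh u - 1 / cosh u`, an increasing function of `u ≥ 0`. Since `coth` decreases
from `∞` to `1` on `(0, ∞)`, the right-hand side is strictly decreasing in `t` and blows up as
`t → 0⁺`, while `cosh t` is strictly increasing, bounded near `0` and unbounded. The two graphs
therefore cross exactly once.
-/

open Real Filter Set Topology

theorem existsUnique_eq_of_strictMonoOn_of_strictAntiOn {X α : Type*} [LinearOrder X]
    [TopologicalSpace X] [LinearOrder α] [TopologicalSpace α] [OrderClosedTopology α] {s : Set X}
    (hs : IsPreconnected s) {l₁ l₂ : Filter X} [l₁.NeBot] [l₂.NeBot] (hl₁ : l₁ ≤ 𝓟 s)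
    (hl₂ : l₂ ≤ 𝓟 s) {f g : X → α} (hfc : ContinuousOn f s) (hgc : ContinuousOn g s)
    (hf : StrictMonoOn f s) (hg : StrictAntiOn g s) (he₁ : f ≤ᶠ[l₁] g) (he₂ : g ≤ᶠ[l₂] f) :
    ∃! x, x ∈ s ∧ f x = g x := by
  obtain ⟨x, hx, hfgx⟩ := hs.intermediate_value₂_eventually₂ hl₁ hl₂ hfc hgc he₁ he₂
  refine ⟨x, ⟨hx, hfgx⟩, fun y ⟨hy, hfgy⟩ => ?_⟩
  have not_lt_of_eq {a b : X} (ha : a ∈ s) (hb : b ∈ s) (hfga : f a = g a) (hfgb : f b = g b) :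
      ¬a < b := fun hab => lt_asymm (hf ha hb hab) (by rw [hfga, hfgb]; exact hg ha hb hab)
  exact le_antisymm (not_lt.1 (not_lt_of_eq hx hy hfgx hfgy))
    (not_lt.1 (not_lt_of_eq hy hx hfgy hfgx))

namespace Real

theorem tanh_mul_sinh (x : ℝ) : tanh x * sinh x = cosh x - (cosh x)⁻¹ := by
  rw [tanh_eq_sinh_div_cosh]
  field_simp
  linear_combination -cosh_sq x

theorem tendsto_cosh_atTop : Tendsto cosh atTop atTop :=
  tendsto_atTop_mono' atTop ((eventually_ge_atTop 0).mono fun _ hx =>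
    (self_le_sinh_iff.2 hx).trans (sinh_lt_cosh _).le) tendsto_id

theorem continuous_tanh_mul_sinh : Continuous fun x => tanh x * sinh x := by
  simp only [tanh_mul_sinh]
  exact continuous_cosh.sub (continuous_cosh.inv₀ fun x => (cosh_pos x).ne')

theorem strictMonoOn_tanh_mul_sinh : StrictMonoOn (fun x => tanh x * sinh x) (Ici 0) := by
  intro x hx y hy hxy
  have hcosh : cosh x < cosh y := cosh_strictMonoOn hx hy hxy
  have hinv : (cosh y)⁻¹ < (cosh x)⁻¹ := (inv_lt_inv₀ (cosh_pos y) (cosh_pos x)).2 hcosh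
  simp only [tanh_mul_sinh]
  linarith

theorem tendsto_tanh_mul_sinh_atTop : Tendsto (fun x => tanh x * sinh x) atTop atTop := by
  refine tendsto_atTop_mono (fun x => ?_) (tendsto_atTop_add_const_right _ (-1) tendsto_cosh_atTop)
  rw [tanh_mul_sinh]
  linarith [inv_le_one_of_one_le₀ (one_le_cosh x)]

theorem tendsto_arsinh_atTop : Tendsto arsinh atTop atTop :=
  sinhOrderIso.symm.tendsto_atTop

theorem cosh_div_sinh_pos {t : ℝ} (ht : 0 < t) : 0 < cosh t / sinh t :=
  div_pos (cosh_pos t) (sinh_pos_iff.2 ht)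

theorem continuousOn_cosh_div_sinh : ContinuousOn (fun t => cosh t / sinh t) (Ioi 0) :=
  continuous_cosh.continuousOn.div continuous_sinh.continuousOn fun _ ht => (sinh_pos_iff.2 ht).ne'

theorem strictAntiOn_cosh_div_sinh : StrictAntiOn (fun t => cosh t / sinh t) (Ioi 0) := by
  intro a ha b hb hab
  have hsa : 0 < sinh a := sinh_pos_iff.2 ha
  have hsb : 0 < sinh b := sinh_pos_iff.2 hb
  have hsub : 0 < sinh (b - a) := sinh_pos_iff.2 (sub_pos.2 hab)
  rw [sinh_sub] at hsub
  rw [div_lt_div_iff₀ hsb hsa]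
  linarith

theorem tendsto_cosh_div_sinh_nhdsGT_zero :
    Tendsto (fun t => cosh t / sinh t) (𝓝[>] 0) atTop := by
  have hsinh : Tendsto sinh (𝓝[>] 0) (𝓝[>] 0) :=
    tendsto_nhdsWithin_of_tendsto_nhds_of_eventually_within _
      (sinh_zero ▸ continuous_sinh.tendsto 0 |>.mono_left nhdsWithin_le_nhds)
      (eventually_nhdsWithin_of_forall fun _ ht => sinh_pos_iff.2 ht)
  have hcosh : Tendsto cosh (𝓝[>] 0) (𝓝 1) :=
    cosh_zero ▸ continuous_cosh.tendsto 0 |>.mono_left nhdsWithin_le_nhds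
  have hinv : Tendsto (fun t => (sinh t)⁻¹) (𝓝[>] 0) atTop := tendsto_inv_nhdsGT_zero.comp hsinh
  simpa only [div_eq_mul_inv] using hcosh.pos_mul_atTop one_pos hinv

theorem eventually_cosh_le_of_tendsto_atTop {g : ℝ → ℝ} (hg : Tendsto g (𝓝[>] 0) atTop) :
    cosh ≤ᶠ[𝓝[>] 0] g := by
  have hcosh : ∀ᶠ t in 𝓝[>] 0, cosh t ≤ 2 :=
    (continuous_cosh.tendsto 0).mono_left nhdsWithin_le_nhds |>.eventually
      (ge_mem_nhds (by norm_num))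
  filter_upwards [hcosh, hg.eventually_ge_atTop 2] with t h₁ h₂ using h₁.trans h₂

theorem eventually_le_cosh_of_antitoneOn {g : ℝ → ℝ} (hg : AntitoneOn g (Ioi 0)) :
    g ≤ᶠ[atTop] cosh := by
  filter_upwards [eventually_ge_atTop 1, tendsto_cosh_atTop.eventually_ge_atTop (g 1)]
    with t ht hcosh
  exact (hg (mem_Ioi.2 one_pos) (mem_Ioi.2 (one_pos.trans_le ht)) ht).trans hcosh

section ArsinhCoth

variable {c : ℝ}

theorem continuousOn_mul_arsinh_cosh_div_sinh :
    ContinuousOn (fun t => c * arsinh (cosh t / sinh t)) (Ioi 0) :=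
  continuousOn_const.mul (continuous_arsinh.comp_continuousOn continuousOn_cosh_div_sinh)

theorem mapsTo_mul_arsinh_cosh_div_sinh (hc : 0 ≤ c) :
    MapsTo (fun t => c * arsinh (cosh t / sinh t)) (Ioi 0) (Ici 0) := fun _ ht =>
  mul_nonneg hc (arsinh_nonneg_iff.2 (cosh_div_sinh_pos ht).le)

theorem strictAntiOn_mul_arsinh_cosh_div_sinh (hc : 0 < c) :
    StrictAntiOn (fun t => c * arsinh (cosh t / sinh t)) (Ioi 0) := fun _ ha _ hb hab =>
  mul_lt_mul_of_pos_left (arsinh_strictMono (strictAntiOn_cosh_div_sinh ha hb hab)) hc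

theorem tendsto_mul_arsinh_cosh_div_sinh_nhdsGT_zero (hc : 0 < c) :
    Tendsto (fun t => c * arsinh (cosh t / sinh t)) (𝓝[>] 0) atTop :=
  (tendsto_arsinh_atTop.comp tendsto_cosh_div_sinh_nhdsGT_zero).const_mul_atTop hc

end ArsinhCoth

end Real

theorem exists_unique_tn (n : ℕ) (hn : 1 ≤ n) :
    ∃! t : ℝ, 0 < t ∧
      Real.cosh t =
        Real.tanh ((4 * n * Real.arsinh (Real.cosh t / Real.sinh t)) / 4) *
          Real.sinh ((4 * n * Real.arsinh (Real.cosh t / Real.sinh t)) / 4) := by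
  have hn₀ : (0 : ℝ) < n := by exact_mod_cast hn
  have hquarter (t : ℝ) :
      4 * n * arsinh (cosh t / sinh t) / 4 = n * arsinh (cosh t / sinh t) := by
    ring
  simp only [hquarter]
  have hrhs_cont := continuous_tanh_mul_sinh.comp_continuousOn
    (continuousOn_mul_arsinh_cosh_div_sinh (c := n))
  have hrhs_anti := strictMonoOn_tanh_mul_sinh.comp_strictAntiOn
    (strictAntiOn_mul_arsinh_cosh_div_sinh hn₀) (mapsTo_mul_arsinh_cosh_div_sinh hn₀.le)
  have hrhs_tendsto := tendsto_tanh_mul_sinh_atTop.comp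
    (tendsto_mul_arsinh_cosh_div_sinh_nhdsGT_zero hn₀)
  exact existsUnique_eq_of_strictMonoOn_of_strictAntiOn (l₁ := 𝓝[>] 0) isPreconnected_Ioi
    inf_le_right (le_principal_iff.2 (Ioi_mem_atTop 0)) continuous_cosh.continuousOn hrhs_cont
    (cosh_strictMonoOn.mono Ioi_subset_Ici_self) hrhs_anti
    (eventually_cosh_le_of_tendsto_atTop hrhs_tendsto)
    (eventually_le_cosh_of_antitoneOn hrhs_anti.antitoneOn)
end
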